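/- Let (Ω,Σ) and (Ω',Σ') be standard Borel spaces, A a POVM on (Ω,Σ), B a POVM on (Ω',Σ'), and M an extreme POVM on (Ω̄,Σ̄). If ran A ∪ ran B ⊆ ran M, then A and B are jointly measurable. -/

import Mathlib

open scoped InnerProductSpace

/-- A positive-operator-valued measure (normalized, defined on all sets, vanishing on
non-measurable sets). -/
structure POVM (Ω : Type*) [MeasurableSpace Ω]
    (H : Type*) [NormedAddCommGroup H] [InnerProductSpace ℂ H] [CompleteSpace H] where
  toFun : Set Ω → (H →L[ℂ] H)
  isPositive' : ∀ s, (toFun s).IsPositive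
  empty' : toFun ∅ = 0
  total' : toFun Set.univ = 1
  not_measurable' : ∀ s, ¬ MeasurableSet s → toFun s = 0
  m_iUnion' : ∀ f : ℕ → Set Ω, (∀ n, MeasurableSet (f n)) → Pairwise (Function.onFun Disjoint f) →
    ∀ x : H, HasSum (fun n => toFun (f n) x) (toFun (⋃ n, f n) x)

variable {Ω Ω' Ωb : Type*} [MeasurableSpace Ω] [MeasurableSpace Ω'] [MeasurableSpace Ωb]
variable {H : Type*} [NormedAddCommGroup H] [InnerProductSpace ℂ H] [CompleteSpace H]

/-- Sharp observable: a projection-valued measure. -/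
def POVM.IsSharp (P : POVM Ω H) : Prop := ∀ s, IsIdempotentElem (P.toFun s)

/-- A POVM is discrete if it is concentrated on a countable set of points. -/
def POVM.Discrete (A : POVM Ω H) : Prop :=
  ∃ D : Set Ω, D.Countable ∧ ∀ s, MeasurableSet s → s ∩ D = ∅ → A.toFun s = 0

/-- Extremality in the convex set of POVMs on `(Ω, Σ)`. -/
def POVM.Extreme (A : POVM Ω H) : Prop :=
  ∀ (A₁ A₂ : POVM Ω H) (t : ℝ), 0 < t → t < 1 →
    (∀ s, A.toFun s = (t : ℂ) • A₁.toFun s + ((1 - t : ℝ) : ℂ) • A₂.toFun s) →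
    A₁.toFun = A.toFun ∧ A₂.toFun = A.toFun

/-- Joint measurability: a POVM on the product σ-algebra having `A` and `B` as marginals. -/
def JointlyMeasurable (A : POVM Ω H) (B : POVM Ω' H) : Prop :=
  ∃ N : POVM (Ω × Ω') H,
    (∀ X, MeasurableSet X → N.toFun (X ×ˢ Set.univ) = A.toFun X) ∧
    (∀ Y, MeasurableSet Y → N.toFun (Set.univ ×ˢ Y) = B.toFun Y)

/-- `ran A ⊆ ran M`. -/
def RanSubset (A : POVM Ω H) (M : POVM Ωb H) : Prop :=
  ∀ X, MeasurableSet X → ∃ Z, MeasurableSet Z ∧ M.toFun Z = A.toFun X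

/-- Coexistence: a common mother observable on some measurable space contains both ranges. -/
def Coexistent (A : POVM Ω H) (B : POVM Ω' H) : Prop :=
  ∃ (Ωm : Type) (_ : MeasurableSpace Ωm) (M : POVM Ωm H), RanSubset A M ∧ RanSubset B M

/-
For an extreme POVM `M`, additive relations between values of `M` hold at the level of sets
up to `M`-null sets: if `M S₁ + M S₂ = M S₃` then `S₁ \ S₃` is `M`-null, for otherwise `M`
would be the midpoint of the two POVMs
`M ± (M(· ∩ (S₁ \ S₃)) + M(· ∩ S₂) - M(· ∩ (S₃ \ S₁))) / 3`.
Embed `Ω` into `EReal` and choose `Z q` with `M (Z q) = A (Iic q)` for rational `q`; the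
previous fact makes `q ↦ Z q` monotone up to null sets, so `A = M ∘ f⁻¹` for
`f ω = inf {q | ω ∈ Z q}`. Likewise `B = M ∘ g⁻¹`, and `M ∘ (f, g)⁻¹`, pulled back along
the embeddings, is a joint observable.
-/

open MeasureTheory Set Function

section LevelInf

variable {α : Type*}

open scoped Classical in
noncomputable def levelInf (Z : ℚ → Set α) (ω : α) : EReal :=
  ⨅ q : ℚ, if ω ∈ Z q then ((q : ℝ) : EReal) else ⊤

lemma measurable_levelInf [MeasurableSpace α] {Z : ℚ → Set α} (hZ : ∀ q, MeasurableSet (Z q)) :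
    Measurable (levelInf Z) :=
  Measurable.iInf fun q => Measurable.ite (hZ q) measurable_const measurable_const

lemma levelInf_preimage_Iio (Z : ℚ → Set α) (x : EReal) :
    levelInf Z ⁻¹' Iio x = ⋃ q : {q : ℚ // ((q : ℝ) : EReal) < x}, Z q := by
  ext ω
  simp only [mem_preimage, mem_Iio, levelInf, iInf_lt_iff, mem_iUnion, Subtype.exists,
    exists_prop]
  refine exists_congr fun q => ?_
  split_ifs with h
  · exact ⟨fun hq => ⟨hq, h⟩, And.left⟩
  · exact ⟨fun hq => absurd hq not_top_lt, fun hq => absurd hq.2 h⟩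

end LevelInf

lemma EReal.iUnion_Iic_rat_eq_Iio (x : EReal) :
    ⋃ q : {q : ℚ // ((q : ℝ) : EReal) < x}, Iic ((q : ℝ) : EReal) = Iio x := by
  ext y
  simp only [mem_iUnion, mem_Iic, mem_Iio, Subtype.exists, exists_prop]
  refine ⟨fun ⟨q, hq, hy⟩ => hy.trans_lt hq, fun hy => ?_⟩
  obtain ⟨q, hyq, hqx⟩ := EReal.lt_iff_exists_rat_btwn.1 hy
  exact ⟨q, hqx, hyq.le⟩

lemma exists_measurableEmbedding_ereal (α : Type*) [MeasurableSpace α] [StandardBorelSpace α] :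
    ∃ e : α → EReal, MeasurableEmbedding e := by
  obtain ⟨e, he⟩ := exists_measurableEmbedding_real α
  exact ⟨_, EReal.isOpenEmbedding_coe.measurableEmbedding.comp he⟩

namespace POVM

@[ext]
lemma ext {A B : POVM Ω H} (h : ∀ s, MeasurableSet s → A.toFun s = B.toFun s) : A = B := by
  have hfun : A.toFun = B.toFun := funext fun s => by
    by_cases hs : MeasurableSet s
    exacts [h s hs, (A.not_measurable' s hs).trans (B.not_measurable' s hs).symm]
  cases A; cases B; congr

def toVectorMeasure (A : POVM Ω H) (x : H) : VectorMeasure Ω H where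
  measureOf' s := A.toFun s x
  empty' := by simp [A.empty']
  not_measurable' s hs := by simp [A.not_measurable' s hs]
  m_iUnion' f hf hd := A.m_iUnion' f hf hd x

lemma toFun_union (A : POVM Ω H) {s t : Set Ω} (hs : MeasurableSet s) (ht : MeasurableSet t)
    (hd : Disjoint s t) : A.toFun (s ∪ t) = A.toFun s + A.toFun t := by
  ext x
  exact (A.toVectorMeasure x).of_union hd hs ht

lemma toFun_diff_add_inter (A : POVM Ω H) {s t : Set Ω} (hs : MeasurableSet s)
    (ht : MeasurableSet t) : A.toFun (s \ t) + A.toFun (s ∩ t) = A.toFun s := by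
  rw [← A.toFun_union (hs.diff ht) (hs.inter ht) disjoint_sdiff_inter, sdiff_union_inter]

noncomputable def measure (A : POVM Ω H) (φ : H) : Measure Ω :=
  Measure.ofMeasurable (fun s _ => ENNReal.ofReal (⟪φ, A.toFun s φ⟫_ℂ).re)
    (by simp [A.empty'])
    (fun f hf hd => by
      have h := Complex.hasSum_re ((innerSL ℂ φ).hasSum (A.m_iUnion' f hf hd φ))
      simp only [innerSL_apply_apply] at h
      rw [← h.tsum_eq]
      exact ENNReal.ofReal_tsum_of_nonneg
        (fun n => (A.isPositive' (f n)).re_inner_nonneg_right φ) h.summable)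

lemma measure_apply (A : POVM Ω H) (φ : H) {s : Set Ω} (hs : MeasurableSet s) :
    A.measure φ s = ENNReal.ofReal (⟪φ, A.toFun s φ⟫_ℂ).re :=
  Measure.ofMeasurable_apply s hs

lemma measure_univ_eq (A : POVM Ω H) (B : POVM Ω' H) (φ : H) :
    A.measure φ univ = B.measure φ univ := by
  rw [measure_apply _ _ .univ, measure_apply _ _ .univ, A.total', B.total']

instance (A : POVM Ω H) (φ : H) : IsFiniteMeasure (A.measure φ) :=
  ⟨by rw [A.measure_apply φ .univ]; exact ENNReal.ofReal_lt_top⟩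

lemma toFun_eq_of_measure_eq {A : POVM Ω H} {B : POVM Ω' H} {s : Set Ω} {t : Set Ω'}
    (hs : MeasurableSet s) (ht : MeasurableSet t) (h : ∀ φ, A.measure φ s = B.measure φ t) :
    A.toFun s = B.toFun t := by
  refine ContinuousLinearMap.coe_injective ((ext_inner_map _ _).1 fun φ => ?_)
  have hA := Complex.nonneg_iff.1 ((A.isPositive' s).inner_nonneg_right φ)
  have hB := Complex.nonneg_iff.1 ((B.isPositive' t).inner_nonneg_right φ)
  have hre := h φ
  rw [measure_apply _ _ hs, measure_apply _ _ ht, ENNReal.ofReal_eq_ofReal_iff hA.1 hB.1] at hre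
  have key : ⟪φ, A.toFun s φ⟫_ℂ = ⟪φ, B.toFun t φ⟫_ℂ := Complex.ext hre (hA.2.symm.trans hB.2)
  simp only [ContinuousLinearMap.coe_coe]
  rw [← inner_conj_symm, key, inner_conj_symm]

lemma ext_of_measure_eq {A B : POVM Ω H} (h : ∀ φ, A.measure φ = B.measure φ) : A = B :=
  ext fun s hs => toFun_eq_of_measure_eq hs hs fun φ => by rw [h]

lemma toFun_eq_zero_iff (A : POVM Ω H) {s : Set Ω} (hs : MeasurableSet s) :
    A.toFun s = 0 ↔ ∀ φ, A.measure φ s = 0 := by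
  refine ⟨fun h φ => by simp [measure_apply _ _ hs, h], fun h => ?_⟩
  rw [← A.empty']
  exact toFun_eq_of_measure_eq hs .empty fun φ => by rw [h, measure_empty]

lemma toFun_union_eq_zero (A : POVM Ω H) {s t : Set Ω} (hs : MeasurableSet s)
    (ht : MeasurableSet t) (h₁ : A.toFun s = 0) (h₂ : A.toFun t = 0) : A.toFun (s ∪ t) = 0 :=
  (A.toFun_eq_zero_iff (hs.union ht)).2 fun φ =>
    measure_union_null ((A.toFun_eq_zero_iff hs).1 h₁ φ) ((A.toFun_eq_zero_iff ht).1 h₂ φ)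

open scoped Classical in
noncomputable def ofMeasurable (m : Set Ω → H →L[ℂ] H)
    (hpos : ∀ s, MeasurableSet s → (m s).IsPositive) (hempty : m ∅ = 0) (huniv : m univ = 1)
    (hiUnion : ∀ f : ℕ → Set Ω, (∀ n, MeasurableSet (f n)) → Pairwise (Disjoint on f) →
      ∀ x, HasSum (fun n => m (f n) x) (m (⋃ n, f n) x)) : POVM Ω H where
  toFun s := if MeasurableSet s then m s else 0
  isPositive' s := by
    split_ifs with hs
    exacts [hpos s hs, ContinuousLinearMap.isPositive_zero]
  empty' := by rw [if_pos .empty, hempty]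
  total' := by rw [if_pos .univ, huniv]
  not_measurable' s hs := if_neg hs
  m_iUnion' f hf hd x := by
    simpa only [if_pos (hf _), if_pos (MeasurableSet.iUnion hf)] using hiUnion f hf hd x

lemma ofMeasurable_apply {m : Set Ω → H →L[ℂ] H} {hpos hempty huniv hiUnion} {s : Set Ω}
    (hs : MeasurableSet s) : (ofMeasurable m hpos hempty huniv hiUnion).toFun s = m s :=
  if_pos hs

noncomputable def map (A : POVM Ω H) (f : Ω → Ω') (hf : Measurable f) : POVM Ω' H :=
  ofMeasurable (fun s => A.toFun (f ⁻¹' s)) (fun s _ => A.isPositive' _)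
    (by rw [preimage_empty, A.empty']) (by rw [preimage_univ, A.total'])
    (fun s hs hd x => by
      simpa only [preimage_iUnion] using
        A.m_iUnion' _ (fun n => hf (hs n)) (fun i j hij => (hd hij).preimage f) x)

lemma map_apply (A : POVM Ω H) {f : Ω → Ω'} (hf : Measurable f) {s : Set Ω'}
    (hs : MeasurableSet s) : (A.map f hf).toFun s = A.toFun (f ⁻¹' s) :=
  ofMeasurable_apply hs

lemma measure_map (A : POVM Ω H) {f : Ω → Ω'} (hf : Measurable f) (φ : H) :
    (A.map f hf).measure φ = (A.measure φ).map f := by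
  ext s hs
  rw [Measure.map_apply hf hs, measure_apply _ _ hs, measure_apply _ _ (hf hs), map_apply _ hf hs]

lemma map_map (A : POVM Ω H) {f : Ω → Ω'} {g : Ω' → Ωb} (hf : Measurable f)
    (hg : Measurable g) : (A.map f hf).map g hg = A.map (g ∘ f) (hg.comp hf) :=
  ext_of_measure_eq fun φ => by
    rw [measure_map, measure_map, measure_map, Measure.map_map hg hf]

lemma map_injective {A B : POVM Ω H} {e : Ω → Ω'} (he : MeasurableEmbedding e)
    (h : A.map e he.measurable = B.map e he.measurable) : A = B := by
  ext s hs
  have hs' := he.measurableSet_image.2 hs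
  rw [← preimage_image_eq s he.injective, ← map_apply _ he.measurable hs', h,
    map_apply _ he.measurable hs']

lemma map_toFun_compl_range (A : POVM Ω H) {e : Ω → Ω'} (he : MeasurableEmbedding e) :
    (A.map e he.measurable).toFun (range e)ᶜ = 0 := by
  rw [map_apply _ _ he.measurableSet_range.compl, preimage_compl, preimage_range, compl_univ,
    A.empty']

lemma _root_.RanSubset.map {A : POVM Ω H} {M : POVM Ωb H} (hA : RanSubset A M) {e : Ω → Ω'}
    (he : Measurable e) : RanSubset (A.map e he) M := fun s hs => by
  rw [map_apply _ he hs]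
  exact hA _ (he hs)

lemma toFun_inter_of_compl_eq_zero (A : POVM Ω H) {s t : Set Ω} (hs : MeasurableSet s)
    (ht : MeasurableSet t) (h : A.toFun tᶜ = 0) : A.toFun (s ∩ t) = A.toFun s :=
  toFun_eq_of_measure_eq (hs.inter ht) hs fun φ =>
    measure_inter_conull ((A.toFun_eq_zero_iff ht.compl).1 h φ)

noncomputable def comap (P : POVM Ω' H) (e : Ω → Ω') (he : MeasurableEmbedding e)
    (hP : P.toFun (range e)ᶜ = 0) : POVM Ω H :=
  ofMeasurable (fun s => P.toFun (e '' s)) (fun s _ => P.isPositive' _)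
    (by rw [image_empty, P.empty'])
    (by rw [image_univ, ← univ_inter (range e),
      P.toFun_inter_of_compl_eq_zero .univ he.measurableSet_range hP, P.total'])
    (fun s hs hd x => by
      simpa only [image_iUnion] using
        P.m_iUnion' _ (fun n => he.measurableSet_image.2 (hs n))
          (fun i j hij => (disjoint_image_iff he.injective).2 (hd hij)) x)

lemma comap_apply (P : POVM Ω' H) {e : Ω → Ω'} (he : MeasurableEmbedding e) (hP)
    {s : Set Ω} (hs : MeasurableSet s) : (P.comap e he hP).toFun s = P.toFun (e '' s) :=
  ofMeasurable_apply hs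

lemma map_comap (P : POVM Ω' H) {e : Ω → Ω'} (he : MeasurableEmbedding e) (hP) :
    (P.comap e he hP).map e he.measurable = P := by
  ext s hs
  rw [map_apply _ _ hs, comap_apply _ he _ (he.measurable hs), image_preimage_eq_inter_range,
    P.toFun_inter_of_compl_eq_zero hs he.measurableSet_range hP]

section Perturbation

variable {ι : Type*} [Fintype ι] {M : POVM Ω H} {E : ι → Set Ω} {c : ι → ℝ}

lemma isPositive_toFun_add_sum_smul_toFun_inter (hE : ∀ i, MeasurableSet (E i))
    (hc : ∑ i, |c i| ≤ 1) {s : Set Ω} (hs : MeasurableSet s) :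
    (M.toFun s + ∑ i, (c i : ℂ) • M.toFun (s ∩ E i)).IsPositive := by
  have hdiff : ∀ i, M.toFun (s \ E i) = M.toFun s - M.toFun (s ∩ E i) := fun i =>
    eq_sub_of_add_eq (M.toFun_diff_add_inter hs (hE i))
  have key : M.toFun s + ∑ i, (c i : ℂ) • M.toFun (s ∩ E i) =
      ((1 - ∑ i, |c i| : ℝ) : ℂ) • M.toFun s + ∑ i, (((|c i| : ℝ) : ℂ) • M.toFun (s \ E i) +
        ((|c i| + c i : ℝ) : ℂ) • M.toFun (s ∩ E i)) := by
    simp only [hdiff, smul_sub, Complex.ofReal_add, add_smul, Finset.sum_add_distrib,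
      Finset.sum_sub_distrib, ← Finset.sum_smul, Complex.ofReal_sub, Complex.ofReal_sum, sub_smul,
      Complex.ofReal_one, one_smul]
    abel
  rw [key]
  refine ((M.isPositive' s).smul_of_nonneg ?_).add
    (ContinuousLinearMap.isPositive_sum _ fun i _ => ?_)
  · exact Complex.zero_le_real.2 (sub_nonneg.2 hc)
  · exact ((M.isPositive' _).smul_of_nonneg (Complex.zero_le_real.2 (abs_nonneg _))).add
      ((M.isPositive' _).smul_of_nonneg (Complex.zero_le_real.2 (by linarith [neg_abs_le (c i)])))

noncomputable def perturb (M : POVM Ω H) (E : ι → Set Ω) (c : ι → ℝ)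
    (hE : ∀ i, MeasurableSet (E i)) (hc : ∑ i, |c i| ≤ 1)
    (h : ∑ i, (c i : ℂ) • M.toFun (E i) = 0) : POVM Ω H :=
  ofMeasurable (fun s => M.toFun s + ∑ i, (c i : ℂ) • M.toFun (s ∩ E i))
    (fun _ hs => isPositive_toFun_add_sum_smul_toFun_inter hE hc hs)
    (by simp [M.empty'])
    (by simp only [univ_inter, h, M.total', add_zero])
    (fun f hf hd x => by
      simp only [add_apply, sum_apply, smul_apply]
      refine (M.m_iUnion' f hf hd x).add (hasSum_sum fun i _ => ?_)
      simpa only [iUnion_inter] using (M.m_iUnion' (fun n => f n ∩ E i)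
        (fun n => (hf n).inter (hE i))
        (fun a b hab => (hd hab).mono inter_subset_left inter_subset_left) x).const_smul
          (c i : ℂ))

lemma perturb_apply {hE hc h} {s : Set Ω} (hs : MeasurableSet s) :
    (M.perturb E c hE hc h).toFun s = M.toFun s + ∑ i, (c i : ℂ) • M.toFun (s ∩ E i) :=
  ofMeasurable_apply hs

theorem Extreme.sum_smul_toFun_inter_eq_zero (hM : M.Extreme) (hE : ∀ i, MeasurableSet (E i))
    (hc : ∑ i, |c i| ≤ 1) (h : ∑ i, (c i : ℂ) • M.toFun (E i) = 0) {s : Set Ω}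
    (hs : MeasurableSet s) : ∑ i, (c i : ℂ) • M.toFun (s ∩ E i) = 0 := by
  have hc' : ∑ i, |(-c) i| ≤ 1 := by simpa using hc
  have h' : ∑ i, ((-c) i : ℂ) • M.toFun (E i) = 0 := by
    simp only [Pi.neg_apply, Complex.ofReal_neg, neg_smul, Finset.sum_neg_distrib, h, neg_zero]
  have hmid : ∀ s, M.toFun s = ((1 / 2 : ℝ) : ℂ) • (M.perturb E c hE hc h).toFun s +
      ((1 - 1 / 2 : ℝ) : ℂ) • (M.perturb E (-c) hE hc' h').toFun s := by
    intro s
    by_cases hs : MeasurableSet s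
    · rw [perturb_apply hs, perturb_apply hs]
      simp only [Pi.neg_apply, Complex.ofReal_neg, neg_smul, Finset.sum_neg_distrib]
      push_cast
      module
    · simp [not_measurable' _ s hs]
  have := congrFun (hM _ _ (1 / 2) (by norm_num) (by norm_num) hmid).1 s
  rwa [perturb_apply hs, add_eq_left] at this

end Perturbation

lemma toFun_diff_add_eq_of_add_eq (A : POVM Ω H) {s₁ s₂ s₃ : Set Ω} (h₁ : MeasurableSet s₁)
    (h₃ : MeasurableSet s₃) (h : A.toFun s₁ + A.toFun s₂ = A.toFun s₃) :
    A.toFun (s₁ \ s₃) + A.toFun s₂ = A.toFun (s₃ \ s₁) := by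
  have e₁ := A.toFun_diff_add_inter h₁ h₃
  have e₃ := A.toFun_diff_add_inter h₃ h₁
  rw [inter_comm] at e₃
  apply add_right_cancel (b := A.toFun (s₁ ∩ s₃))
  rw [e₃, ← h, ← e₁]
  abel

theorem Extreme.toFun_diff_eq_zero_of_add_eq {M : POVM Ω H} (hM : M.Extreme) {s₁ s₂ s₃ : Set Ω}
    (h₁ : MeasurableSet s₁) (h₂ : MeasurableSet s₂) (h₃ : MeasurableSet s₃)
    (h : M.toFun s₁ + M.toFun s₂ = M.toFun s₃) : M.toFun (s₁ \ s₃) = 0 := by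
  have hsum := M.toFun_diff_add_eq_of_add_eq h₁ h₃ h
  have key := hM.sum_smul_toFun_inter_eq_zero (E := ![s₁ \ s₃, s₂, s₃ \ s₁])
    (c := ![1 / 3, 1 / 3, -(1 / 3)]) (fun i => by fin_cases i <;> simp [h₁.diff h₃, h₂, h₃.diff h₁])
    (by norm_num [Fin.sum_univ_three, Matrix.cons_val_two])
    (by simp [Fin.sum_univ_three, ← hsum]; module) (h₁.diff h₃)
  simp only [Fin.sum_univ_three, Matrix.cons_val_zero, Matrix.cons_val_one, Matrix.cons_val_two,
    Matrix.head_cons, Matrix.tail_cons, inter_self, disjoint_sdiff_sdiff.inter_eq, M.empty',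
    smul_zero, add_zero, ← smul_add, smul_eq_zero] at key
  have hpos := fun s => (ContinuousLinearMap.nonneg_iff_isPositive _).2 (M.isPositive' s)
  exact ((add_eq_zero_iff_of_nonneg (hpos _) (hpos _)).1 (key.resolve_left (by norm_num))).1

theorem map_levelInf_eq {M : POVM Ωb H} {A : POVM EReal H} {Z : ℚ → Set Ωb}
    (hZm : Monotone Z) (hZ : ∀ q, MeasurableSet (Z q))
    (hMA : ∀ q, M.toFun (Z q) = A.toFun (Iic ((q : ℝ) : EReal))) :
    M.map (levelInf Z) (measurable_levelInf hZ) = A := by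
  refine ext_of_measure_eq fun φ => ?_
  rw [measure_map]
  refine ext_of_generate_finite _
    ((borel_eq_generateFrom_Iio EReal) ▸ BorelSpace.measurable_eq) isPiSystem_Iio ?_ ?_
  · rintro _ ⟨x, rfl⟩
    have hZx : Monotone fun q : {q : ℚ // ((q : ℝ) : EReal) < x} => Z q :=
      fun a b hab => hZm hab
    have hIic : Monotone fun q : {q : ℚ // ((q : ℝ) : EReal) < x} => Iic ((q : ℝ) : EReal) :=
      fun a b hab => Iic_subset_Iic.2 (EReal.coe_le_coe_iff.2 (Rat.cast_le.2 hab))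
    rw [Measure.map_apply (measurable_levelInf hZ) measurableSet_Iio, levelInf_preimage_Iio,
      ← EReal.iUnion_Iic_rat_eq_Iio, hZx.directed_le.measure_iUnion,
      hIic.directed_le.measure_iUnion]
    congr 1; funext q
    rw [measure_apply _ _ (hZ q), measure_apply _ _ measurableSet_Iic, hMA]
  · rw [Measure.map_apply (measurable_levelInf hZ) .univ, preimage_univ, M.measure_univ_eq A φ]

theorem Extreme.exists_monotone_toFun_eq_Iic {M : POVM Ωb H} (hM : M.Extreme)
    {A : POVM EReal H} (hA : RanSubset A M) :
    ∃ Z : ℚ → Set Ωb, Monotone Z ∧ (∀ q, MeasurableSet (Z q)) ∧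
      ∀ q, M.toFun (Z q) = A.toFun (Iic ((q : ℝ) : EReal)) := by
  choose Z hZ hMZ using fun q : ℚ => hA (Iic ((q : ℝ) : EReal)) measurableSet_Iic
  have hnull : ∀ r q : ℚ, r ≤ q → M.toFun (Z r \ Z q) = 0 := by
    intro r q hrq
    obtain ⟨W, hW, hMW⟩ := hA (Ioc ((r : ℝ) : EReal) ((q : ℝ) : EReal)) measurableSet_Ioc
    refine hM.toFun_diff_eq_zero_of_add_eq (hZ r) hW (hZ q) ?_
    rw [hMZ, hMW, hMZ, ← A.toFun_union measurableSet_Iic measurableSet_Ioc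
      (Iic_disjoint_Ioc le_rfl), Iic_union_Ioc_eq_Iic (by exact_mod_cast hrq)]
  refine ⟨fun q => ⋃ r : {r : ℚ // r ≤ q}, Z r,
    fun q q' h => iUnion_mono' fun r : {r : ℚ // r ≤ q} =>
      ⟨(⟨r, r.2.trans h⟩ : {r : ℚ // r ≤ q'}), subset_rfl⟩,
    fun q => .iUnion fun r => hZ r, fun q => ?_⟩
  rw [← hMZ q]
  refine toFun_eq_of_measure_eq (.iUnion fun r => hZ r) (hZ q) fun φ => ?_
  refine (measure_eq_measure_of_null_sdiff
    (subset_iUnion_of_subset (⟨q, le_rfl⟩ : {r : ℚ // r ≤ q}) subset_rfl) ?_).symm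
  rw [iUnion_sdiff]
  exact measure_iUnion_null fun r => (M.toFun_eq_zero_iff ((hZ r).diff (hZ q))).1 (hnull r q r.2) φ

theorem Extreme.exists_map_eq {M : POVM Ωb H} (hM : M.Extreme) {A : POVM EReal H}
    (hA : RanSubset A M) : ∃ (f : Ωb → EReal) (hf : Measurable f), M.map f hf = A := by
  obtain ⟨Z, hZm, hZ, hMZ⟩ := hM.exists_monotone_toFun_eq_Iic hA
  exact ⟨_, _, map_levelInf_eq hZm hZ hMZ⟩

end POVM

lemma jointlyMeasurable_iff_exists_map {A : POVM Ω H} {B : POVM Ω' H} :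
    JointlyMeasurable A B ↔ ∃ N : POVM (Ω × Ω') H,
      N.map Prod.fst measurable_fst = A ∧ N.map Prod.snd measurable_snd = B := by
  refine exists_congr fun N =>
    and_congr ⟨fun h => ?_, fun h s hs => ?_⟩ ⟨fun h => ?_, fun h s hs => ?_⟩
  · ext s hs
    rw [POVM.map_apply _ _ hs, ← prod_univ, h s hs]
  · rw [prod_univ, ← POVM.map_apply _ measurable_fst hs, h]
  · ext s hs
    rw [POVM.map_apply _ _ hs, ← univ_prod, h s hs]
  · rw [univ_prod, ← POVM.map_apply _ measurable_snd hs, h]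

lemma POVM.jointlyMeasurable_map_map (M : POVM Ωb H) {f : Ωb → Ω} {g : Ωb → Ω'}
    (hf : Measurable f) (hg : Measurable g) : JointlyMeasurable (M.map f hf) (M.map g hg) :=
  jointlyMeasurable_iff_exists_map.2
    ⟨M.map (fun ω => (f ω, g ω)) (hf.prodMk hg), M.map_map _ _, M.map_map _ _⟩

lemma JointlyMeasurable.of_map {α β : Type*} [MeasurableSpace α] [MeasurableSpace β]
    {A : POVM Ω H} {B : POVM Ω' H} {e : Ω → α} {e' : Ω' → β} (he : MeasurableEmbedding e)
    (he' : MeasurableEmbedding e')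
    (h : JointlyMeasurable (A.map e he.measurable) (B.map e' he'.measurable)) :
    JointlyMeasurable A B := by
  obtain ⟨N, hNA, hNB⟩ := jointlyMeasurable_iff_exists_map.1 h
  have hnull : N.toFun (range (Prod.map e e'))ᶜ = 0 := by
    have hr := he.measurableSet_range
    have hr' := he'.measurableSet_range
    rw [range_prodMap, compl_prod_eq_union, prod_univ, univ_prod]
    refine N.toFun_union_eq_zero (measurable_fst hr.compl) (measurable_snd hr'.compl) ?_ ?_
    · rw [← POVM.map_apply _ measurable_fst hr.compl, hNA, A.map_toFun_compl_range he]
    · rw [← POVM.map_apply _ measurable_snd hr'.compl, hNB, B.map_toFun_compl_range he']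
  have hee' := he.prodMap he'
  rw [← N.map_comap hee' hnull, POVM.map_map] at hNA hNB
  refine jointlyMeasurable_iff_exists_map.2 ⟨N.comap _ hee' hnull,
    POVM.map_injective he ?_, POVM.map_injective he' ?_⟩
  · rw [POVM.map_map]; exact hNA
  · rw [POVM.map_map]; exact hNB

theorem extreme_mother_implies_jointlyMeasurable_general
    [StandardBorelSpace Ω] [StandardBorelSpace Ω']
    (A : POVM Ω H) (B : POVM Ω' H) (M : POVM Ωb H) (hext : M.Extreme)
    (hA : RanSubset A M) (hB : RanSubset B M) :
    JointlyMeasurable A B := by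
  obtain ⟨e, he⟩ := exists_measurableEmbedding_ereal Ω
  obtain ⟨e', he'⟩ := exists_measurableEmbedding_ereal Ω'
  obtain ⟨f, hf, hfA⟩ := hext.exists_map_eq (hA.map he.measurable)
  obtain ⟨g, hg, hgB⟩ := hext.exists_map_eq (hB.map he'.measurable)
  refine JointlyMeasurable.of_map he he' ?_
  rw [← hfA, ← hgB]
  exact M.jointlyMeasurable_map_map hf hg

/-- Let `(Ω,Σ)` and `(Ω',Σ')` be standard Borel spaces, `A`, `B` POVMs on
them, and `M` an extreme POVM on a measurable space `(Ω̄,Σ̄)` (on a separable complex Hilbert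
space).  If `ran A ∪ ran B ⊆ ran M` then `A` and `B` are jointly measurable. -/
theorem extreme_mother_implies_jointlyMeasurable
    [StandardBorelSpace Ω] [StandardBorelSpace Ω'] [TopologicalSpace.SeparableSpace H]
    (A : POVM Ω H) (B : POVM Ω' H) (M : POVM Ωb H) (hext : M.Extreme)
    (hA : RanSubset A M) (hB : RanSubset B M) :
    JointlyMeasurable A B :=
  extreme_mother_implies_jointlyMeasurable_general A B M hext hA hB
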